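/- arXiv:math/0702418 — 7 statements merged into one kernel-verified Lean document; each statement's English description precedes it below -/
import Mathlib

section
/- Let U^d : [0,∞) → ℝ^p be RCLL with increments in a closed convex cone 𝒰 satisfying u·û₁ ≥ a₀|u| for all u ∈ 𝒰, for some unit vector û₁ and constant a₀ > 0. For k ≥ 1 define U_k(t) = k ∫_{(t-1/k)⁺}^t U^d(s) ds + k(1/k - t)⁺ U^d(0). Then U_k is continuous with increments in 𝒰, and for all 0 ≤ t ≤ T, a₀ |U_k(t)| ≤ U_k(t)·û₁ ≤ U^d(T)·û₁ ≤ |U^d(T)|. -/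
/-!
Extending `U^d` to negative times by the constant `U^d(0)` turns `U_k(t)` into the average of
`U^d` over the window `[t - 1/k, t]`. Averages of `𝒰`-valued functions lie in `𝒰`, since `𝒰` is
closed and convex. The increment `U_k(t) - U_k(s)` is the window average of the increments
`U^d(r) - U^d(r - (t - s))`, and `U^d(T) - U_k(t)` is the window average of `U^d(T) - U^d(r)`,
so both lie in `𝒰`, which gives the inequalities after pairing with `û₁`.

Integrability comes from the cone condition alone: `|U^d(t) - U^d(s)| ≤ a₀⁻¹ (g t - g s)` for the
monotone `g = U^d · û₁`, so `U^d` is a Lipschitz function of `g`, hence measurable and locally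
bounded.
-/

open Set Filter MeasureTheory intervalIntegral
open scoped Interval InnerProductSpace

theorem add_mem_of_convex_of_smul_mem {E : Type*} [AddCommGroup E] [Module ℝ E] {C : Set E}
    (hconv : Convex ℝ C) (hcone : ∀ a : ℝ, 0 ≤ a → ∀ u ∈ C, a • u ∈ C) {u v : E}
    (hu : u ∈ C) (hv : v ∈ C) : u + v ∈ C := by
  have h := hcone 2 zero_le_two _ (hconv hu hv (by norm_num : (0 : ℝ) ≤ 1 / 2)
    (by norm_num : (0 : ℝ) ≤ 1 / 2) (by norm_num))
  rwa [smul_add, smul_smul, smul_smul, show (2 : ℝ) * (1 / 2) = 1 by norm_num, one_smul,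
    one_smul] at h

section InnerCone

variable {E : Type*} [NormedAddCommGroup E] [InnerProductSpace ℝ E] {C : Set E} {e : E} {a : ℝ}

theorem inner_nonneg_of_mem (ha : 0 ≤ a) (hdot : ∀ u ∈ C, a * ‖u‖ ≤ ⟪u, e⟫_ℝ) {u : E}
    (hu : u ∈ C) : 0 ≤ ⟪u, e⟫_ℝ :=
  (mul_nonneg ha (norm_nonneg u)).trans (hdot u hu)

theorem inner_le_inner_of_sub_mem (ha : 0 ≤ a) (hdot : ∀ u ∈ C, a * ‖u‖ ≤ ⟪u, e⟫_ℝ)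
    {u v : E} (h : v - u ∈ C) : ⟪u, e⟫_ℝ ≤ ⟪v, e⟫_ℝ := by
  have := inner_nonneg_of_mem ha hdot h
  rw [inner_sub_left] at this
  linarith

theorem dist_le_inv_mul_inner_sub (ha : 0 < a) (hdot : ∀ u ∈ C, a * ‖u‖ ≤ ⟪u, e⟫_ℝ)
    {u v : E} (h : v - u ∈ C) : dist u v ≤ a⁻¹ * (⟪v, e⟫_ℝ - ⟪u, e⟫_ℝ) := by
  rw [dist_comm, dist_eq_norm, ← inner_sub_left, le_inv_mul_iff₀ ha]
  exact hdot _ h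

variable {V : ℝ → E}

theorem monotone_inner_of_sub_mem (ha : 0 ≤ a) (hdot : ∀ u ∈ C, a * ‖u‖ ≤ ⟪u, e⟫_ℝ)
    (hV : ∀ s t, s ≤ t → V t - V s ∈ C) : Monotone fun r => ⟪V r, e⟫_ℝ :=
  fun s t hst => inner_le_inner_of_sub_mem ha hdot (hV s t hst)

theorem dist_le_inv_mul_dist_inner (ha : 0 < a) (hdot : ∀ u ∈ C, a * ‖u‖ ≤ ⟪u, e⟫_ℝ)
    (hV : ∀ s t, s ≤ t → V t - V s ∈ C) (s t : ℝ) :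
    dist (V s) (V t) ≤ a⁻¹ * dist ⟪V s, e⟫_ℝ ⟪V t, e⟫_ℝ := by
  have hmono := monotone_inner_of_sub_mem ha.le hdot hV
  rcases le_total s t with hst | hts
  · rw [Real.dist_eq, abs_sub_comm, abs_of_nonneg (sub_nonneg.2 (hmono hst))]
    exact dist_le_inv_mul_inner_sub ha hdot (hV s t hst)
  · rw [dist_comm, Real.dist_eq, abs_of_nonneg (sub_nonneg.2 (hmono hts))]
    exact dist_le_inv_mul_inner_sub ha hdot (hV t s hts)

end InnerCone

section ControlledByMonotone

variable {E : Type*} [NormedAddCommGroup E] [NormedSpace ℝ E] [FiniteDimensional ℝ E]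
  [MeasurableSpace E] [BorelSpace E] {f : ℝ → E} {g : ℝ → ℝ} {K : ℝ}

theorem measurable_of_dist_le_mul_dist (hg : Monotone g)
    (h : ∀ x y, dist (f x) (f y) ≤ K * dist (g x) (g y)) : Measurable f := by
  have hfac : ∀ x, f (Function.invFun g (g x)) = f x := fun x =>
    dist_le_zero.1 <| by simpa [Function.invFun_eq ⟨x, rfl⟩] using h (Function.invFun g (g x)) x
  have hlip : LipschitzOnWith K.toNNReal (f ∘ Function.invFun g) (range g) := by
    refine LipschitzOnWith.of_dist_le' ?_
    rintro _ ⟨x, rfl⟩ _ ⟨y, rfl⟩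
    simpa only [Function.comp_apply, hfac] using h x y
  obtain ⟨G, hG, hGf⟩ := hlip.extend_finite_dimension
  have hfG : f = G ∘ g := funext fun x => by
    rw [Function.comp_apply, ← hGf (mem_range_self x), Function.comp_apply, hfac]
  exact hfG ▸ hG.continuous.measurable.comp hg.measurable

theorem intervalIntegrable_of_dist_le_mul_dist (hg : Monotone g)
    (h : ∀ x y, dist (f x) (f y) ≤ K * dist (g x) (g y)) (a b : ℝ) :
    IntervalIntegrable f volume a b := by
  refine IntervalIntegrable.mono_fun' (g := fun x => ‖f a‖ + |K| * |g x - g a|)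
    (intervalIntegrable_const.add
      ((hg.intervalIntegrable.sub intervalIntegrable_const).abs.const_mul _))
    (measurable_of_dist_le_mul_dist hg h).aestronglyMeasurable (ae_of_all _ fun x => ?_)
  calc ‖f x‖ ≤ ‖f a‖ + dist (f x) (f a) := by
        rw [dist_eq_norm]; exact norm_le_norm_add_norm_sub' (f x) (f a)
    _ ≤ ‖f a‖ + |K| * |g x - g a| := by
        rw [← Real.dist_eq]
        gcongr
        exact (h x a).trans (mul_le_mul_of_nonneg_right (le_abs_self K) dist_nonneg)

end ControlledByMonotone

section WindowAverage

variable {E : Type*} [NormedAddCommGroup E] [NormedSpace ℝ E] {C : Set E}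
  {f V : ℝ → E} {a b c : ℝ}

theorem interval_average_mem [CompleteSpace E] (hC : IsClosed C) (hconv : Convex ℝ C)
    (hab : a < b) (hf : IntervalIntegrable f volume a b) (hfC : ∀ x ∈ Ioc a b, f x ∈ C) :
    ⨍ x in a..b, f x ∈ C := by
  rw [uIoc_of_le hab.le]
  refine hconv.set_average_mem hC ?_ measure_Ioc_lt_top.ne
    (ae_restrict_of_forall_mem measurableSet_Ioc hfC) hf.1
  simpa [Real.volume_Ioc] using hab

theorem sub_interval_average_mem [CompleteSpace E] (hC : IsClosed C) (hconv : Convex ℝ C)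
    (hab : a < b) (hf : IntervalIntegrable f volume a b) {u : E}
    (hfC : ∀ x ∈ Ioc a b, u - f x ∈ C) :
    u - ⨍ x in a..b, f x ∈ C := by
  have hconst : u - ⨍ x in a..b, f x = ⨍ x in a..b, (u - f x) := by
    rw [interval_average_eq, interval_average_eq, integral_sub intervalIntegrable_const hf,
      intervalIntegral.integral_const, smul_sub, smul_smul,
      inv_mul_cancel₀ (sub_ne_zero.2 hab.ne'), one_smul]
  rw [hconst]
  exact interval_average_mem hC hconv hab (intervalIntegrable_const.sub hf) hfC

variable (c) in
theorem continuous_interval_average_window (hV : ∀ a b, IntervalIntegrable V volume a b) :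
    Continuous fun t => ⨍ r in (t - c)..t, V r := by
  have hP := continuous_primitive hV 0
  have hwindow : (fun t => ∫ r in (t - c)..t, V r) =
      fun t => (∫ r in (0 : ℝ)..t, V r) - ∫ r in (0 : ℝ)..(t - c), V r :=
    funext fun t => (integral_interval_sub_left (hV 0 t) (hV 0 (t - c))).symm
  simp_rw [interval_average_eq, sub_sub_cancel]
  refine Continuous.const_smul ?_ c⁻¹
  rw [hwindow]
  exact hP.sub (hP.comp (continuous_sub_right c))

theorem interval_average_window_sub (hV : ∀ a b, IntervalIntegrable V volume a b) (c s t : ℝ) :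
    (⨍ r in (t - c)..t, V r) - ⨍ r in (s - c)..s, V r =
      ⨍ r in (t - c)..t, (V r - V (r - (t - s))) := by
  have hshift : IntervalIntegrable (fun r => V (r - (t - s))) volume (t - c) t := by
    simpa using (hV (s - c) s).comp_sub_right (t - s)
  rw [interval_average_eq, interval_average_eq, interval_average_eq, sub_sub_cancel,
    sub_sub_cancel, integral_sub (hV _ _) hshift, integral_comp_sub_right,
    sub_sub_sub_cancel_left, sub_sub_cancel, smul_sub]

theorem interval_average_window_sub_mem [CompleteSpace E] (hC : IsClosed C)
    (hconv : Convex ℝ C) (hV_int : ∀ a b, IntervalIntegrable V volume a b)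
    (hV : ∀ s t, s ≤ t → V t - V s ∈ C) (hc : 0 < c) {s t : ℝ} (hst : s ≤ t) :
    (⨍ r in (t - c)..t, V r) - ⨍ r in (s - c)..s, V r ∈ C := by
  rw [interval_average_window_sub hV_int]
  have hshift : IntervalIntegrable (fun r => V (r - (t - s))) volume (t - c) t := by
    simpa using (hV_int (s - c) s).comp_sub_right (t - s)
  exact interval_average_mem hC hconv (by linarith) ((hV_int _ _).sub hshift)
    fun r _ => hV _ _ (by linarith)

theorem integral_comp_max_zero [CompleteSpace E]
    (hf : ∀ a b, IntervalIntegrable (fun r => f (max r 0)) volume a b) {t : ℝ} (ht : 0 ≤ t)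
    (a : ℝ) : ∫ r in a..t, f (max r 0) = (∫ r in (max a 0)..t, f r) + max (-a) 0 • f 0 := by
  rw [← integral_add_adjacent_intervals (hf a (max a 0)) (hf (max a 0) t), add_comm]
  congr 1
  · refine intervalIntegral.integral_congr fun r hr => ?_
    have : 0 ≤ r := le_trans (le_min (le_max_right a 0) ht) hr.1
    simp only [max_eq_left this]
  · rcases le_total a 0 with ha | ha
    · rw [max_eq_right ha, max_eq_left (neg_nonneg.2 ha), ← zero_sub,
        ← intervalIntegral.integral_const]
      refine intervalIntegral.integral_congr fun r hr => ?_
      rw [uIcc_of_le ha] at hr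
      simp only [max_eq_right hr.2]
    · rw [max_eq_left ha, max_eq_right (neg_nonpos.2 ha), integral_same, zero_smul]

end WindowAverage

theorem stmt_3_general {p : ℕ} (𝒰 : Set (EuclideanSpace ℝ (Fin p)))
    (hclosed : IsClosed 𝒰) (hconv : Convex ℝ 𝒰)
    (hcone : ∀ a : ℝ, 0 ≤ a → ∀ u ∈ 𝒰, a • u ∈ 𝒰)
    (hatu : EuclideanSpace ℝ (Fin p)) (hunit : ‖hatu‖ = 1)
    (a0 : ℝ) (ha0 : 0 < a0)
    (hdot : ∀ u ∈ 𝒰, a0 * ‖u‖ ≤ (inner ℝ u hatu : ℝ))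
    (Ud : ℝ → EuclideanSpace ℝ (Fin p))
    (hUd0 : Ud 0 ∈ 𝒰)
    (hUdinc : ∀ s t : ℝ, 0 ≤ s → s ≤ t → Ud t - Ud s ∈ 𝒰)
    (Uk : ℕ → ℝ → EuclideanSpace ℝ (Fin p))
    (hUk : ∀ (k : ℕ) (t : ℝ), Uk k t =
      (k : ℝ) • (∫ s in (max (t - 1 / (k : ℝ)) 0)..t, Ud s) +
        ((k : ℝ) * max (1 / (k : ℝ) - t) 0) • Ud 0) :
    ∀ k : ℕ, 1 ≤ k →
      ContinuousOn (Uk k) (Ici 0) ∧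
      Uk k 0 ∈ 𝒰 ∧
      (∀ s t : ℝ, 0 ≤ s → s ≤ t → Uk k t - Uk k s ∈ 𝒰) ∧
      (∀ t T : ℝ, 0 ≤ t → t ≤ T →
        a0 * ‖Uk k t‖ ≤ (inner ℝ (Uk k t) hatu : ℝ) ∧
        (inner ℝ (Uk k t) hatu : ℝ) ≤ (inner ℝ (Ud T) hatu : ℝ) ∧
        (inner ℝ (Ud T) hatu : ℝ) ≤ ‖Ud T‖) := by
  intro k hk
  have hV : ∀ s t : ℝ, s ≤ t → Ud (max t 0) - Ud (max s 0) ∈ 𝒰 := fun s t hst =>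
    hUdinc _ _ (le_max_right _ _) (max_le_max hst le_rfl)
  have hV_int : ∀ a b, IntervalIntegrable (fun r => Ud (max r 0)) volume a b :=
    intervalIntegrable_of_dist_le_mul_dist (monotone_inner_of_sub_mem ha0.le hdot hV)
      (dist_le_inv_mul_dist_inner ha0 hdot hV)
  have hc : (0 : ℝ) < 1 / k := by positivity
  have hUk_avg : ∀ t, 0 ≤ t → Uk k t = ⨍ r in (t - 1 / k)..t, Ud (max r 0) := fun t ht => by
    rw [hUk, interval_average_eq, sub_sub_cancel, inv_div, div_one,
      integral_comp_max_zero hV_int ht, neg_sub, smul_add, smul_smul]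
  have hV_mem : ∀ r : ℝ, Ud (max r 0) ∈ 𝒰 := fun r => by
    simpa using add_mem_of_convex_of_smul_mem hconv hcone hUd0
      (hUdinc 0 (max r 0) le_rfl (le_max_right r 0))
  have hUk_mem : ∀ t, 0 ≤ t → Uk k t ∈ 𝒰 := fun t ht => hUk_avg t ht ▸
    interval_average_mem hclosed hconv (by linarith) (hV_int _ _) fun r _ => hV_mem r
  refine ⟨?_, hUk_mem 0 le_rfl, fun s t hs hst => ?_, fun t T ht htT => ?_⟩
  · exact (continuous_interval_average_window _ hV_int).continuousOn.congr hUk_avg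
  · rw [hUk_avg s hs, hUk_avg t (hs.trans hst)]
    exact interval_average_window_sub_mem hclosed hconv hV_int hV hc hst
  · have hle : Ud T - Uk k t ∈ 𝒰 := hUk_avg t ht ▸
      sub_interval_average_mem hclosed hconv (by linarith) (hV_int _ _) fun r hr =>
        hUdinc _ _ (le_max_right _ _) (max_le (hr.2.trans htT) (ht.trans htT))
    refine ⟨hdot _ (hUk_mem t ht), inner_le_inner_of_sub_mem ha0.le hdot hle, ?_⟩
    simpa [hunit] using real_inner_le_norm (Ud T) hatu

/-- the averaged approximation `U_k` of an RCLL function `U^d`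
with increments in a closed convex cone is continuous, has increments in the
cone, and satisfies `a₀|U_k(t)| ≤ U_k(t)·û₁ ≤ U^d(T)·û₁ ≤ |U^d(T)|` for
`0 ≤ t ≤ T`. -/
theorem stmt_3 {p : ℕ} (𝒰 : Set (EuclideanSpace ℝ (Fin p)))
    (hclosed : IsClosed 𝒰) (hconv : Convex ℝ 𝒰)
    (hcone : ∀ a : ℝ, 0 ≤ a → ∀ u ∈ 𝒰, a • u ∈ 𝒰)
    (hatu : EuclideanSpace ℝ (Fin p)) (hunit : ‖hatu‖ = 1)
    (a0 : ℝ) (ha0 : 0 < a0)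
    (hdot : ∀ u ∈ 𝒰, a0 * ‖u‖ ≤ (inner ℝ u hatu : ℝ))
    (Ud : ℝ → EuclideanSpace ℝ (Fin p))
    (hrc : ∀ t : ℝ, 0 ≤ t → ContinuousWithinAt Ud (Ici t) t)
    (hll : ∀ t : ℝ, 0 < t → ∃ L, Tendsto Ud (nhdsWithin t (Iio t)) (nhds L))
    (hUd0 : Ud 0 ∈ 𝒰)
    (hUdinc : ∀ s t : ℝ, 0 ≤ s → s ≤ t → Ud t - Ud s ∈ 𝒰)
    (Uk : ℕ → ℝ → EuclideanSpace ℝ (Fin p))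
    (hUk : ∀ (k : ℕ) (t : ℝ), Uk k t =
      (k : ℝ) • (∫ s in (max (t - 1 / (k : ℝ)) 0)..t, Ud s) +
        ((k : ℝ) * max (1 / (k : ℝ) - t) 0) • Ud 0) :
    ∀ k : ℕ, 1 ≤ k →
      ContinuousOn (Uk k) (Ici 0) ∧
      Uk k 0 ∈ 𝒰 ∧
      (∀ s t : ℝ, 0 ≤ s → s ≤ t → Uk k t - Uk k s ∈ 𝒰) ∧
      (∀ t T : ℝ, 0 ≤ t → t ≤ T →
        a0 * ‖Uk k t‖ ≤ (inner ℝ (Uk k t) hatu : ℝ) ∧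
        (inner ℝ (Uk k t) hatu : ℝ) ≤ (inner ℝ (Ud T) hatu : ℝ) ∧
        (inner ℝ (Ud T) hatu : ℝ) ≤ ‖Ud T‖) :=
  stmt_3_general 𝒰 hclosed hconv hcone hatu hunit a0 ha0 hdot Ud hUd0 hUdinc Uk hUk
end

section
/- Let f : [0,∞) → ℝ be an RCLL function and for k ≥ 1 define f̄_k(t) = k ∫_{(t-1/k)⁺}^t f(s) ds + k(1/k - t)⁺ f(0). Then f̄_k(t) → f(t-) as k → ∞ for every t > 0, and f̄_k(0) = f(0). In particular f̄_k(t) → f(t) for all but countably many t. -/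
/-!
For `t > 0` and large `k`, `f̄_k(t) = k ∫_{t-1/k}^t f` is a left difference quotient of
`u ↦ ∫_u^t f` at `t`, so the one-sided fundamental theorem of calculus turns the left limit of
`f` at `t` into the limit of `f̄_k(t)`; the only analytic input is local measurability, which
right continuity provides by sampling `f` on a grid to the right of each point.

For the exceptional set: at every point `t` both `f` and its left-limit function `f(·-)` tend to
`f(t-)` from the left and to `f(t)` from the right, so `|f(s-) - f(s)| → 0` as `s → t`, `s ≠ t`.
Hence each set `{|f(s-) - f(s)| > 1/n}` is discrete, thus countable, and `f̄_k(t) → f(t)`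
fails only where `f(t-) ≠ f(t)`.
-/

open Set Filter MeasureTheory Topology Function

section LeftLim

variable {α β : Type*} [TopologicalSpace α] [LinearOrder α] [OrderTopology α]

theorem tendsto_leftLim_nhdsWithin_of_isOpen [TopologicalSpace β] [RegularSpace β] {f : α → β}
    {s : Set α} {a : α} {b : β} (hs : IsOpen s) (h : Tendsto f (𝓝[s] a) (𝓝 b)) :
    Tendsto (leftLim f) (𝓝[s] a) (𝓝 b) := by
  refine (closed_nhds_basis b).tendsto_right_iff.2 fun K ⟨hK, hKc⟩ => ?_
  filter_upwards [eventually_eventually_nhdsWithin.2 (h hK), self_mem_nhdsWithin] with x hx hxs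
  rw [hs.nhdsWithin_eq hxs] at hx
  exact hKc.mem_of_mapClusterPt (mapClusterPt_leftLim f x) (mem_nhdsWithin_of_mem_nhds hx)

theorem tendsto_dist_leftLim_nhdsNE [PseudoMetricSpace β] {f : α → β} {a : α} {l r : β}
    (hl : Tendsto f (𝓝[<] a) (𝓝 l)) (hr : Tendsto f (𝓝[>] a) (𝓝 r)) :
    Tendsto (fun x => dist (leftLim f x) (f x)) (𝓝[≠] a) (𝓝 0) := by
  rw [← nhdsLT_sup_nhdsGT, tendsto_sup]
  constructor
  · simpa using (tendsto_leftLim_nhdsWithin_of_isOpen isOpen_Iio hl).dist hl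
  · simpa using (tendsto_leftLim_nhdsWithin_of_isOpen isOpen_Ioi hr).dist hr

end LeftLim

theorem countable_setOf_ne_zero_of_tendsto_nhdsNE {X : Type*} [TopologicalSpace X]
    [HereditarilyLindelofSpace X] {g : X → ℝ} {s : Set X}
    (h : ∀ x ∈ s, Tendsto g (𝓝[≠] x) (𝓝 0)) : {x ∈ s | g x ≠ 0}.Countable := by
  have hsub : {x ∈ s | g x ≠ 0} ⊆ ⋃ n : ℕ, {x ∈ s | 1 / (n + 1 : ℝ) < |g x|} := fun x hx =>
    mem_iUnion.2 <| (exists_nat_one_div_lt (abs_pos.2 hx.2)).imp fun _ hn => ⟨hx.1, hn⟩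
  refine .mono hsub <| countable_iUnion fun n => ?_
  refine (HereditarilyLindelofSpace.isLindelof _).countable_of_isDiscrete ?_
  refine isDiscrete_iff_nhdsNE.2 fun x hx => inf_principal_eq_bot.2 ?_
  filter_upwards [(h x hx.1).abs (Iio_mem_nhds (by simp; positivity : |(0 : ℝ)| < 1 / (n + 1)))]
    with y hy hys using lt_asymm hy hys.2

theorem countable_setOf_leftLim_ne {α β : Type*} [TopologicalSpace α] [LinearOrder α]
    [OrderTopology α] [HereditarilyLindelofSpace α] [MetricSpace β] {f : α → β} {s : Set α}
    (hl : ∀ x ∈ s, ∃ l, Tendsto f (𝓝[<] x) (𝓝 l))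
    (hr : ∀ x ∈ s, ∃ r, Tendsto f (𝓝[>] x) (𝓝 r)) :
    {x ∈ s | leftLim f x ≠ f x}.Countable := by
  have := countable_setOf_ne_zero_of_tendsto_nhdsNE (g := fun x => dist (leftLim f x) (f x))
    fun x hx => tendsto_dist_leftLim_nhdsNE (hl x hx).choose_spec (hr x hx).choose_spec
  simpa only [ne_eq, dist_eq_zero] using this

theorem tendsto_ceil_mul_div_nhdsGE (x : ℝ) :
    Tendsto (fun n : ℕ => (⌈x * (n + 1)⌉ : ℝ) / (n + 1)) atTop (𝓝[≥] x) := by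
  have hpos (n : ℕ) : (0 : ℝ) < n + 1 := n.cast_add_one_pos
  have hge (n : ℕ) : x ≤ (⌈x * (n + 1)⌉ : ℝ) / (n + 1) := by
    rw [le_div_iff₀ (hpos n)]; exact Int.le_ceil _
  have hle (n : ℕ) : (⌈x * (n + 1)⌉ : ℝ) / (n + 1) ≤ x + 1 / (n + 1) := by
    rw [div_le_iff₀ (hpos n), add_mul, one_div_mul_cancel (hpos n).ne']
    exact (Int.ceil_lt_add_one _).le
  refine tendsto_nhdsWithin_of_tendsto_nhds_of_eventually_within _ ?_ (.of_forall hge)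
  refine tendsto_of_tendsto_of_tendsto_of_le_of_le tendsto_const_nhds ?_ hge hle
  simpa using tendsto_const_nhds.add (tendsto_one_div_add_atTop_nhds_zero_nat (𝕜 := ℝ))

theorem aestronglyMeasurable_restrict_of_continuousWithinAt_Ici {β : Type*} [TopologicalSpace β]
    [TopologicalSpace.PseudoMetrizableSpace β] {f : ℝ → β} {μ : Measure ℝ} {s : Set ℝ}
    (hs : MeasurableSet s)
    (hf : ∀ x ∈ s, ContinuousWithinAt f (Ici x) x) :
    AEStronglyMeasurable f (μ.restrict s) := by
  refine aestronglyMeasurable_of_tendsto_ae atTop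
    (f := fun (n : ℕ) (x : ℝ) => f (⌈x * (n + 1)⌉ / (n + 1))) (fun n => ?_) ?_
  · have hg : StronglyMeasurable fun z : ℤ => f ((z : ℝ) / (n + 1)) := .of_discrete
    exact (hg.comp_measurable <| Int.measurable_ceil.comp <| measurable_id.mul_const _)
      |>.aestronglyMeasurable
  · filter_upwards [ae_restrict_mem hs] with x hx
    exact (hf x hx).tendsto.comp (tendsto_ceil_mul_div_nhdsGE x)

theorem tendsto_inv_smul_integral_sub_of_tendsto_nhdsLT {E : Type*} [NormedAddCommGroup E]
    [NormedSpace ℝ E] [CompleteSpace E] {f : ℝ → E} {t : ℝ} {L : E}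
    (hmeas : StronglyMeasurableAtFilter f (𝓝[≤] t)) (hL : Tendsto f (𝓝[<] t) (𝓝 L)) :
    Tendsto (fun h : ℝ => h⁻¹ • ∫ s in t - h..t, f s) (𝓝[>] 0) (𝓝 L) := by
  have hae : 𝓝[≤] t ⊓ ae volume ≤ 𝓝[<] t := by
    refine le_inf (inf_le_left.trans nhdsWithin_le_nhds) (le_principal_iff.2 ?_)
    refine mem_inf_of_inter self_mem_nhdsWithin (compl_mem_ae_iff.2 (measure_singleton t)) ?_
    exact fun x ⟨hxt, hx⟩ => lt_of_le_of_ne hxt hx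
  have hderiv : HasDerivWithinAt (fun u => ∫ s in u..t, f s) (-L) (Iio t) t :=
    hasDerivWithinAt_Iio_iff_Iic.2 <|
      intervalIntegral.integral_hasDerivWithinAt_of_tendsto_ae_left .refl hmeas (hL.mono_left hae)
  have hsub : Tendsto (fun h : ℝ => t - h) (𝓝[>] 0) (𝓝[<] t) := by
    refine tendsto_nhdsWithin_of_tendsto_nhds_of_eventually_within _ ?_ ?_
    · exact ((continuous_const.sub continuous_id).tendsto' 0 t (sub_zero t)).mono_left
        nhdsWithin_le_nhds
    · exact eventually_nhdsWithin_of_forall fun h (hh : 0 < h) => sub_lt_self t hh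
  have := (((hasDerivWithinAt_iff_tendsto_slope' self_notMem_Iio).1 hderiv).comp hsub).neg
  rw [neg_neg] at this
  refine this.congr fun h => ?_
  simp [slope_def_module]

/-- for an RCLL real-valued function `f`, the averaged
approximations `f̄_k(t) = k∫_{(t-1/k)⁺}^t f + k(1/k - t)⁺ f(0)` converge to
the left limit `f(t-)` for every `t > 0`, agree with `f(0)` at `0`, and hence
converge to `f(t)` for all but countably many `t ≥ 0`. -/
theorem stmt_5 (f : ℝ → ℝ)
    (hrc : ∀ t : ℝ, 0 ≤ t → ContinuousWithinAt f (Ici t) t)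
    (hll : ∀ t : ℝ, 0 < t → ∃ L, Tendsto f (nhdsWithin t (Iio t)) (nhds L))
    (fbar : ℕ → ℝ → ℝ)
    (hfbar : ∀ (k : ℕ) (t : ℝ), fbar k t =
      (k : ℝ) * (∫ s in (max (t - 1 / (k : ℝ)) 0)..t, f s) +
        (k : ℝ) * max (1 / (k : ℝ) - t) 0 * f 0) :
    (∀ t : ℝ, 0 < t →
      Tendsto (fun k : ℕ => fbar k t) atTop (nhds (Function.leftLim f t))) ∧
    (∀ k : ℕ, 1 ≤ k → fbar k 0 = f 0) ∧
    Set.Countable {t : ℝ | 0 ≤ t ∧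
      ¬ Tendsto (fun k : ℕ => fbar k t) atTop (nhds (f t))} := by
  have hmeas : AEStronglyMeasurable f (volume.restrict (Ici 0)) :=
    aestronglyMeasurable_restrict_of_continuousWithinAt_Ici measurableSet_Ici hrc
  have hleft (t : ℝ) (ht : 0 < t) :
      Tendsto (fun k : ℕ => fbar k t) atTop (𝓝 (leftLim f t)) := by
    obtain ⟨L, hL⟩ := hll t ht
    rw [leftLim_eq_of_tendsto hL]
    have hk : Tendsto (fun k : ℕ => 1 / (k : ℝ)) atTop (𝓝[>] 0) := by
      simpa only [one_div, Function.comp_def] using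
        tendsto_inv_atTop_nhdsGT_zero.comp tendsto_natCast_atTop_atTop
    refine ((tendsto_inv_smul_integral_sub_of_tendsto_nhdsLT
      ⟨Ici 0, mem_nhdsWithin_of_mem_nhds (Ici_mem_nhds ht), hmeas⟩ hL).comp hk).congr' ?_
    filter_upwards [tendsto_one_div_atTop_nhds_zero_nat.eventually (eventually_le_nhds ht)]
      with k hkt
    rw [hfbar, max_eq_left (sub_nonneg.2 hkt), max_eq_right (sub_nonpos.2 hkt)]
    simp
  have hzero (k : ℕ) (hk : 1 ≤ k) : fbar k 0 = f 0 := by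
    have hkpos : (0 : ℝ) < k := by exact_mod_cast hk
    rw [hfbar, max_eq_right (by simp), sub_zero, max_eq_left (by positivity),
      intervalIntegral.integral_same, mul_zero, zero_add, mul_one_div_cancel hkpos.ne', one_mul]
  have hright (t : ℝ) (ht : t ∈ Ioi 0) : ∃ r, Tendsto f (𝓝[>] t) (𝓝 r) :=
    ⟨f t, (hrc t ht.le).tendsto.mono_left (nhdsWithin_mono _ Ioi_subset_Ici_self)⟩
  refine ⟨hleft, hzero, (countable_setOf_leftLim_ne hll hright).mono ?_⟩
  rintro t ⟨ht, hconv⟩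
  obtain rfl | ht := ht.eq_or_lt
  · exact absurd (tendsto_const_nhds.congr' <|
      (eventually_ge_atTop 1).mono fun k hk => (hzero k hk).symm) hconv
  · exact ⟨ht, fun heq => hconv (heq ▸ hleft t ht)⟩
end

section
/- Let a : [0,∞) → [0,∞) be right-continuous and nondecreasing with a(0) = 0, and let c(t) = inf{s ≥ 0 : a(s) > t} be its right inverse, assumed finite for all t. Then for every nonnegative Borel function f on [0,∞), ∫_{[0,∞)} f(s) da(s) = ∫_{[0,∞)} f(c(s)) ds, where the left integral is the Lebesgue–Stieltjes integral with respect to a. -/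
open Set Filter MeasureTheory

/-!
The Stieltjes measure `da` does not charge `(-∞, 0)`, so it is determined by its distribution
function `x ↦ da((-∞, x]) = a(x)`. The pushforward of Lebesgue measure on `[0, ∞)` under `c` has
the same distribution function: by right-continuity of `a`, `{t ≥ 0 : c t ≤ x}` lies between
`[0, a(x))` and `[0, a(x)]`. Hence `da` is the image of `ds` under `c`, which is the formula.
-/

theorem MeasureTheory.Measure.ext_of_Iic_of_ne_top {α : Type*} [TopologicalSpace α]
    {m : MeasurableSpace α} [SecondCountableTopology α] [LinearOrder α] [OrderTopology α]
    [BorelSpace α] [NoMinOrder α] (μ ν : Measure α) (hμ : ∀ a, μ (Iic a) ≠ ⊤)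
    (h : ∀ a, μ (Iic a) = ν (Iic a)) : μ = ν := by
  refine Measure.ext_of_Ioc' μ ν (fun a b _ => ?_) (fun a b hab => ?_)
  · exact ne_top_of_le_ne_top (hμ b) (measure_mono Ioc_subset_Iic_self)
  · rw [← Iic_sdiff_Iic, measure_sdiff (Iic_subset_Iic.2 hab.le) nullMeasurableSet_Iic (hμ a),
      measure_sdiff (Iic_subset_Iic.2 hab.le) nullMeasurableSet_Iic (h a ▸ hμ a), h a, h b]

namespace StieltjesFunction

variable (A : StieltjesFunction ℝ)

section Nonpositive

variable {A} (hA : ∀ t ≤ 0, A t = 0)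
include hA

theorem measure_Iic_of_eq_zero_of_nonpos (x : ℝ) : A.measure (Iic x) = ENNReal.ofReal (A x) := by
  have hbot : Tendsto A atBot (nhds 0) :=
    tendsto_const_nhds.congr' (eventually_atBot.2 ⟨0, fun t ht => (hA t ht).symm⟩)
  rw [A.measure_Iic hbot, sub_zero]

theorem measure_restrict_Ici_of_eq_zero_of_nonpos : A.measure.restrict (Ici 0) = A.measure := by
  refine Measure.restrict_eq_self_of_ae_mem (measure_mono_null (t := Iic 0) (fun t ht => ?_) ?_)
  · exact (not_le.1 (mem_Ici.not.1 ht)).le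
  · rw [measure_Iic_of_eq_zero_of_nonpos hA, hA 0 le_rfl, ENNReal.ofReal_zero]

end Nonpositive

noncomputable def rightInv (t : ℝ) : ℝ := sInf {s : ℝ | 0 ≤ s ∧ t < A s}

theorem rightInv_le_of_lt {t x : ℝ} (hx : 0 ≤ x) (ht : t < A x) : A.rightInv t ≤ x :=
  csInf_le ⟨0, fun _ hs => hs.1⟩ ⟨hx, ht⟩

variable {A} (hne : ∀ t, ∃ s, 0 ≤ s ∧ t < A s)
include hne

theorem monotone_rightInv : Monotone A.rightInv := fun _ t₂ h =>
  csInf_le_csInf ⟨0, fun _ hs => hs.1⟩ (hne t₂) fun _ hs => ⟨hs.1, h.trans_lt hs.2⟩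

theorem le_of_rightInv_le {t x : ℝ} (hx : A.rightInv t ≤ x) : t ≤ A x := by
  have hlt : ∀ y > x, t < A y := fun y hy => by
    obtain ⟨s, ⟨-, hts⟩, hsy⟩ := exists_lt_of_csInf_lt (hne t) (hx.trans_lt hy)
    exact hts.trans_le (A.mono hsy.le)
  exact ge_of_tendsto ((A.right_continuous x).mono Ioi_subset_Ici_self)
    (eventually_nhdsWithin_of_forall fun y hy => (hlt y hy).le)

theorem volume_Ici_rightInv_preimage_Iic (hA : ∀ t ≤ 0, A t = 0) (x : ℝ) :
    volume (A.rightInv ⁻¹' Iic x ∩ Ici 0) = ENNReal.ofReal (A x) := by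
  refine le_antisymm ?_ ?_
  · calc volume (A.rightInv ⁻¹' Iic x ∩ Ici 0) ≤ volume (Icc 0 (A x)) :=
          measure_mono fun t ht => ⟨ht.2, le_of_rightInv_le hne ht.1⟩
      _ = ENNReal.ofReal (A x) := by rw [Real.volume_Icc, sub_zero]
  · rcases lt_or_ge x 0 with hx | hx
    · simp [hA x hx.le]
    · calc ENNReal.ofReal (A x) = volume (Ico 0 (A x)) := by rw [Real.volume_Ico, sub_zero]
        _ ≤ volume (A.rightInv ⁻¹' Iic x ∩ Ici 0) :=
          measure_mono fun t ht => ⟨A.rightInv_le_of_lt hx ht.2, ht.1⟩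

theorem measure_eq_map_rightInv (hA : ∀ t ≤ 0, A t = 0) :
    A.measure = (volume.restrict (Ici 0)).map A.rightInv := by
  have hmeas := (monotone_rightInv hne).measurable
  refine Measure.ext_of_Iic_of_ne_top _ _ (fun x => ?_) (fun x => ?_)
  · rw [measure_Iic_of_eq_zero_of_nonpos hA]
    exact ENNReal.ofReal_ne_top
  · rw [measure_Iic_of_eq_zero_of_nonpos hA, Measure.map_apply hmeas measurableSet_Iic,
      Measure.restrict_apply (hmeas measurableSet_Iic), volume_Ici_rightInv_preimage_Iic hne hA]

end StieltjesFunction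

/-- change-of-variables formula `∫_{[0,∞)} f(s) da(s) =
∫_{[0,∞)} f(c(s)) ds` for a right-continuous nondecreasing `a` with
`a(0) = 0` (extended by `0` on the negative half-line) and right inverse
`c(t) = inf{s ≥ 0 : a(s) > t}`, assumed finite for all `t ≥ 0`. -/
theorem stmt_6 (A : StieltjesFunction ℝ)
    (hAneg : ∀ t : ℝ, t ≤ 0 → A t = 0)
    (c : ℝ → ℝ) (hc : ∀ t, c t = sInf {s : ℝ | 0 ≤ s ∧ t < A s})
    (hfin : ∀ t : ℝ, 0 ≤ t → ∃ s, 0 ≤ s ∧ t < A s)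
    (f : ℝ → ENNReal) (hf : Measurable f) :
    ∫⁻ s in Ici (0 : ℝ), f s ∂A.measure = ∫⁻ s in Ici (0 : ℝ), f (c s) := by
  obtain rfl : c = A.rightInv := funext hc
  have hne : ∀ t, ∃ s, 0 ≤ s ∧ t < A s := fun t => by
    rcases le_or_gt 0 t with ht | ht
    · exact hfin t ht
    · exact ⟨0, le_rfl, by rwa [hAneg 0 le_rfl]⟩
  rw [StieltjesFunction.measure_restrict_Ici_of_eq_zero_of_nonpos hAneg,
    StieltjesFunction.measure_eq_map_rightInv hne hAneg,
    lintegral_map hf (StieltjesFunction.monotone_rightInv hne).measurable]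
end

section
/- Suppose (X_n)_{n≥1} is a sequence of ℝ^p-valued random variables with sup_n E|X_n|^α < ∞ for some α > 0, and (τ̂_n)_{n≥1} are random nondecreasing continuous functions on [0,∞) such that for each t > M, {τ̂_n(t) < M} ⊆ {|X_n| > t - M}. If τ̂_n converges weakly (in C([0,∞))) to a process τ̂ with nondecreasing paths, then P[lim_{t→∞} τ̂(t) < M] = 0 for every M > 0; in particular τ̂(t) → ∞ as t → ∞ almost surely. -/
/-!
Markov's inequality and the inclusion `{τ̂ₙ(t) < M} ⊆ {|Xₙ| > t - M}` bound
`P[τ̂ₙ(t) < M]` by `C / (t - M)^α` uniformly in `n`. Evaluation at `t` is continuous on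
`C(ℝ, ℝ)`, so the laws of `τ̂ₙ(t)` converge weakly to that of `τ̂(t)`, and the portmanteau
theorem for the open set `(-∞, M)` passes the bound to `τ̂(t)`. A path bounded by some `L < M`
lies in `{τ̂(t) < M}` for every `t`, so this event has probability at most `C / (t - M)^α → 0`.
Monotone paths that are a.s. unbounded tend to infinity.
-/

open Set Filter MeasureTheory Topology

open scoped ENNReal BoundedContinuousFunction

section WeakConvergence

variable {Ω E F ι : Type*} [MeasurableSpace Ω] [TopologicalSpace E]
  [MeasurableSpace F] [TopologicalSpace F] [OpensMeasurableSpace F] {L : Filter ι}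
  {Y : ι → Ω → E} {Y' : Ω → E}

theorem MeasureTheory.ProbabilityMeasure.tendsto_map_of_tendsto_integral_comp
    (P : ProbabilityMeasure Ω)
    (hweak : ∀ G : E →ᵇ ℝ,
      Tendsto (fun i => ∫ ω, G (Y i ω) ∂P) L (𝓝 (∫ ω, G (Y' ω) ∂P)))
    (φ : C(E, F)) (hY : ∀ i, AEMeasurable (φ ∘ Y i) P) (hY' : AEMeasurable (φ ∘ Y') P) :
    Tendsto (fun i => P.map (hY i)) L (𝓝 (P.map hY')) := by
  refine ProbabilityMeasure.tendsto_iff_forall_integral_tendsto.2 fun f => ?_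
  simp only [ProbabilityMeasure.toMeasure_map, integral_map hY' f.continuous.aestronglyMeasurable,
    integral_map (hY _) f.continuous.aestronglyMeasurable]
  exact hweak (f.compContinuous φ)

theorem measure_preimage_isOpen_le_of_tendsto_integral_comp [HasOuterApproxClosed F]
    (P : Measure Ω) [IsProbabilityMeasure P] [L.NeBot]
    (hweak : ∀ G : E →ᵇ ℝ,
      Tendsto (fun i => ∫ ω, G (Y i ω) ∂P) L (𝓝 (∫ ω, G (Y' ω) ∂P)))
    (φ : C(E, F)) (hY : ∀ i, AEMeasurable (φ ∘ Y i) P) (hY' : AEMeasurable (φ ∘ Y') P)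
    {U : Set F} (hU : IsOpen U) {B : ℝ≥0∞} (hB : ∀ i, P (φ ∘ Y i ⁻¹' U) ≤ B) :
    P (φ ∘ Y' ⁻¹' U) ≤ B := by
  let Pₚ : ProbabilityMeasure Ω := ⟨P, inferInstance⟩
  have hlim := ProbabilityMeasure.le_liminf_measure_open_of_tendsto
    (Pₚ.tendsto_map_of_tendsto_integral_comp hweak φ hY hY') hU
  calc P (φ ∘ Y' ⁻¹' U) = P.map (φ ∘ Y') U :=
        (Measure.map_apply_of_aemeasurable hY' hU.measurableSet).symm
    _ ≤ L.liminf fun i => P.map (φ ∘ Y i) U := hlim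
    _ ≤ B := liminf_le_of_frequently_le' <| .of_forall fun i =>
        (Measure.map_apply_of_aemeasurable (hY i) hU.measurableSet).trans_le (hB i)

end WeakConvergence

theorem meas_lt_norm_le_div_rpow {Ω E : Type*} [MeasurableSpace Ω] [NormedAddCommGroup E]
    [MeasurableSpace E] [OpensMeasurableSpace E]
    {μ : Measure Ω} {X : Ω → E} (hX : AEMeasurable X μ) {α : ℝ} (hα : 0 < α) {C : ℝ≥0∞}
    (hmom : ∫⁻ ω, ENNReal.ofReal (‖X ω‖ ^ α) ∂μ ≤ C) {r : ℝ} (hr : 0 < r) :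
    μ {ω | r < ‖X ω‖} ≤ C / ENNReal.ofReal (r ^ α) := by
  calc μ {ω | r < ‖X ω‖}
      ≤ μ {ω | ENNReal.ofReal (r ^ α) ≤ ENNReal.ofReal (‖X ω‖ ^ α)} :=
        measure_mono fun ω h =>
          ENNReal.ofReal_le_ofReal (Real.rpow_le_rpow hr.le (le_of_lt h) hα.le)
    _ ≤ (∫⁻ ω, ENNReal.ofReal (‖X ω‖ ^ α) ∂μ) / ENNReal.ofReal (r ^ α) :=
        meas_ge_le_lintegral_div
          ((Real.continuous_rpow_const hα.le).measurable.comp_aemeasurable hX.norm).ennreal_ofReal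
          (ENNReal.ofReal_pos.mpr (Real.rpow_pos_of_pos hr α)).ne' ENNReal.ofReal_ne_top
    _ ≤ C / ENNReal.ofReal (r ^ α) := by gcongr

theorem ENNReal.tendsto_div_ofReal_rpow_atTop {C : ℝ≥0∞} (hC : C ≠ ⊤) {α : ℝ} (hα : 0 < α) :
    Tendsto (fun r : ℝ => C / ENNReal.ofReal (r ^ α)) atTop (𝓝 0) := by
  simpa using ENNReal.Tendsto.const_div
    (ENNReal.tendsto_ofReal_atTop.comp (tendsto_rpow_atTop hα)) (Or.inr hC)

theorem MonotoneOn.tendsto_atTop_atTop_of_not_bddAbove {α β : Type*} [Preorder α]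
    [LinearOrder β] {f : α → β} {a : α}
    (hf : MonotoneOn f (Ici a)) (hunb : ¬BddAbove (f '' Ici a)) : Tendsto f atTop atTop := by
  refine tendsto_atTop.2 fun b => ?_
  obtain ⟨_, ⟨t, hat, rfl⟩, hbt⟩ := not_bddAbove_iff.1 hunb b
  filter_upwards [eventually_ge_atTop t] with s hs
  exact hbt.le.trans (hf hat (le_trans hat hs) hs)

theorem stmt_10_general {p : ℕ} {Ω : Type*} [MeasurableSpace Ω]
    (P : Measure Ω) [IsProbabilityMeasure P]
    (X : ℕ → Ω → EuclideanSpace ℝ (Fin p))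
    (hXmeas : ∀ n, Measurable (X n))
    (α : ℝ) (hα : 0 < α) (C : ENNReal) (hC : C ≠ ⊤)
    (hmom : ∀ n, ∫⁻ ω, ENNReal.ofReal (‖X n ω‖ ^ α) ∂P ≤ C)
    (τhatn : ℕ → Ω → C(ℝ, ℝ)) (τhat : Ω → C(ℝ, ℝ))
    (hτnmeas : ∀ n t, Measurable fun ω => τhatn n ω t)
    (hτmeas : ∀ t : ℝ, Measurable fun ω => τhat ω t)
    (hτmono : ∀ᵐ ω ∂P, MonotoneOn (τhat ω) (Ici 0))
    (hincl : ∀ (n : ℕ) (M t : ℝ), 0 < M → M < t →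
      {ω | τhatn n ω t < M} ⊆ {ω | t - M < ‖X n ω‖})
    (hweak : ∀ G : BoundedContinuousFunction C(ℝ, ℝ) ℝ,
      Tendsto (fun n => ∫ ω, G (τhatn n ω) ∂P) atTop
        (nhds (∫ ω, G (τhat ω) ∂P))) :
    (∀ M : ℝ, 0 < M →
      P {ω | ∃ L, L < M ∧ ∀ t : ℝ, 0 ≤ t → τhat ω t ≤ L} = 0) ∧
    (∀ᵐ ω ∂P, Tendsto (fun t : ℝ => τhat ω t) atTop atTop) := by
  have hτ_lt : ∀ M t, 0 < M → M < t →
      P {ω | τhat ω t < M} ≤ C / ENNReal.ofReal ((t - M) ^ α) := fun M t hM ht =>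
    measure_preimage_isOpen_le_of_tendsto_integral_comp P hweak
      ⟨fun f => f t, continuous_eval_const t⟩ (fun n => (hτnmeas n t).aemeasurable)
      (hτmeas t).aemeasurable isOpen_Iio fun n =>
        (measure_mono (hincl n M t hM ht)).trans
          (meas_lt_norm_le_div_rpow (hXmeas n).aemeasurable hα (hmom n) (sub_pos.2 ht))
  have hbounded : ∀ M : ℝ, 0 < M →
      P {ω | ∃ L, L < M ∧ ∀ t : ℝ, 0 ≤ t → τhat ω t ≤ L} = 0 := by
    intro M hM
    have htail := (ENNReal.tendsto_div_ofReal_rpow_atTop hC hα).comp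
      (tendsto_atTop_add_const_right _ (-M) tendsto_id)
    refine le_antisymm (ge_of_tendsto htail ?_) bot_le
    filter_upwards [eventually_gt_atTop (max M 0)] with t ht
    calc P {ω | ∃ L, L < M ∧ ∀ t : ℝ, 0 ≤ t → τhat ω t ≤ L}
        ≤ P {ω | τhat ω t < M} := measure_mono fun ω ⟨L, hLM, hL⟩ =>
          (hL t (le_max_right M 0 |>.trans ht.le)).trans_lt hLM
      _ ≤ _ := hτ_lt M t hM (le_max_left M 0 |>.trans_lt ht)
  refine ⟨hbounded, ?_⟩
  have hunbounded : ∀ᵐ ω ∂P, ∀ k : ℕ,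
      ω ∉ {ω | ∃ L, L < (k : ℝ) + 1 ∧ ∀ t : ℝ, 0 ≤ t → τhat ω t ≤ L} :=
    ae_all_iff.2 fun k => measure_eq_zero_iff_ae_notMem.1 (hbounded _ (by positivity))
  filter_upwards [hτmono, hunbounded] with ω hmono hω
  refine hmono.tendsto_atTop_atTop_of_not_bddAbove fun ⟨b, hb⟩ => ?_
  obtain ⟨k, hk⟩ := exists_nat_gt b
  exact hω k ⟨b, by linarith, fun t ht => hb ⟨t, ht, rfl⟩⟩

/-- if `sup_n E|X_n|^α < ∞`, the nondecreasing continuous time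
changes `τ̂_n` satisfy `{τ̂_n(t) < M} ⊆ {|X_n| > t - M}` for `t > M`, and
`τ̂_n ⇒ τ̂` weakly in `C([0,∞))` (tested against bounded continuous
functionals for the topology of uniform convergence on compacts), then
`P[lim_{t→∞} τ̂(t) < M] = 0` for every `M > 0`; in particular
`τ̂(t) → ∞` as `t → ∞` almost surely. -/
theorem stmt_10 {p : ℕ} {Ω : Type*} [MeasurableSpace Ω]
    (P : Measure Ω) [IsProbabilityMeasure P]
    (X : ℕ → Ω → EuclideanSpace ℝ (Fin p))
    (hXmeas : ∀ n, Measurable (X n))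
    (α : ℝ) (hα : 0 < α) (C : ENNReal) (hC : C ≠ ⊤)
    (hmom : ∀ n, ∫⁻ ω, ENNReal.ofReal (‖X n ω‖ ^ α) ∂P ≤ C)
    (τhatn : ℕ → Ω → C(ℝ, ℝ)) (τhat : Ω → C(ℝ, ℝ))
    (hτnmeas : ∀ n t, Measurable fun ω => τhatn n ω t)
    (hτmeas : ∀ t : ℝ, Measurable fun ω => τhat ω t)
    (hτnmono : ∀ n ω, MonotoneOn (τhatn n ω) (Ici 0))
    (hτnnn : ∀ n ω t, 0 ≤ t → 0 ≤ τhatn n ω t)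
    (hτmono : ∀ᵐ ω ∂P, MonotoneOn (τhat ω) (Ici 0))
    (hincl : ∀ (n : ℕ) (M t : ℝ), 0 < M → M < t →
      {ω | τhatn n ω t < M} ⊆ {ω | t - M < ‖X n ω‖})
    (hweak : ∀ G : BoundedContinuousFunction C(ℝ, ℝ) ℝ,
      Tendsto (fun n => ∫ ω, G (τhatn n ω) ∂P) atTop
        (nhds (∫ ω, G (τhat ω) ∂P))) :
    (∀ M : ℝ, 0 < M →
      P {ω | ∃ L, L < M ∧ ∀ t : ℝ, 0 ≤ t → τhat ω t ≤ L} = 0) ∧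
    (∀ᵐ ω ∂P, Tendsto (fun t : ℝ => τhat ω t) atTop atTop) :=
  stmt_10_general P X hXmeas α hα C hC hmom τhatn τhat hτnmeas hτmeas hτmono hincl hweak
end

section
/- Let (f_n) be a sequence in C([0,∞), ℝ) converging uniformly on compacts to f, and let (a_n) be a sequence of continuous nondecreasing functions converging uniformly on compacts to a continuous nondecreasing function a. Then for all 0 ≤ t ≤ t+s, ∫_t^{t+s} f_n(u) da_n(u) → ∫_t^{t+s} f(u) da(u), where the integrals are Lebesgue–Stieltjes integrals. -/
/-!
Write `∫ fₙ daₙ - ∫ f da = ∫ (fₙ - f) daₙ + (∫ f daₙ - ∫ f da)`. The first term is at most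
`sup |fₙ - f| · (aₙ(t + s) - aₙ(t))`, and the masses converge. For the second, take a partition on
whose cells `f` oscillates by at most `ε`: against any Stieltjes measure the integral is then within
`ε · mass` of the Riemann–Stieltjes sum `∑ f(xᵢ) (F(xᵢ₊₁) - F(xᵢ))`, and these finitely many
sums converge because `aₙ → a` pointwise. Continuity of `aₙ` and `a` at `t` means there is no atom
at `t`, so `[t, t + s]` may be replaced by `(t, t + s]`, whose mass is `aₙ(t + s) - aₙ(t)`.
-/

open Set Filter MeasureTheory

lemma tendsto_of_forall_eventually_abs_sub_le_mul {ι : Type*} {l : Filter ι} {u K : ι → ℝ}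
    {L K₀ : ℝ} (hK : Tendsto K l (nhds K₀))
    (h : ∀ ε > 0, ∀ᶠ n in l, |u n - L| ≤ ε * K n) : Tendsto u l (nhds L) := by
  rw [Metric.tendsto_nhds]
  intro δ hδ
  have hKC : ∀ᶠ n in l, K n < |K₀| + 1 :=
    hK.eventually (gt_mem_nhds ((le_abs_self K₀).trans_lt (lt_add_one _)))
  filter_upwards [h (δ / (2 * (|K₀| + 1))) (by positivity), hKC] with n hn hKn
  rw [Real.dist_eq]
  calc |u n - L| ≤ δ / (2 * (|K₀| + 1)) * (|K₀| + 1) := hn.trans (by gcongr)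
    _ < δ := by field_simp; linarith

lemma exists_partition_abs_sub_le {g : ℝ → ℝ} {a b ε : ℝ} (hab : a ≤ b)
    (hg : ContinuousOn g (Icc a b)) (hε : 0 < ε) :
    ∃ (k : ℕ) (x : ℕ → ℝ), Monotone x ∧ x 0 = a ∧ x k = b ∧
      ∀ i < k, ∀ u ∈ Ioc (x i) (x (i + 1)), |g u - g (x i)| ≤ ε := by
  obtain ⟨δ, hδ, hgδ⟩ := Metric.uniformContinuousOn_iff_le.1
    (isCompact_Icc.uniformContinuousOn_of_continuous hg) ε hε
  obtain ⟨k, hk⟩ := exists_nat_gt ((b - a) / δ)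
  have hkpos : (0 : ℝ) < k := (div_nonneg (sub_nonneg.2 hab) hδ.le).trans_lt hk
  set h := (b - a) / k with hdef
  have hh : 0 ≤ h := div_nonneg (sub_nonneg.2 hab) hkpos.le
  have hhδ : h ≤ δ := by
    rw [div_lt_iff₀ hδ] at hk
    rw [hdef, div_le_iff₀ hkpos]
    linarith
  have hxk : a + k * h = b := by rw [hdef]; field_simp; ring
  refine ⟨k, fun i => a + i * h, fun i j hij => ?_, by simp, hxk, fun i hi u hu => ?_⟩
  · have : (i : ℝ) ≤ j := Nat.cast_le.2 hij
    show a + i * h ≤ a + j * h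
    gcongr
  · have hi' : (i : ℝ) + 1 ≤ k := by exact_mod_cast hi
    push_cast at hu
    have hxi : a ≤ a + i * h := le_add_of_nonneg_right (by positivity)
    have hxi1 : a + (i + 1) * h ≤ b := by rw [← hxk]; gcongr
    refine hgδ u ⟨by nlinarith [hu.1], hu.2.trans hxi1⟩ _ ⟨hxi, by nlinarith⟩ ?_
    rw [Real.dist_eq, abs_of_nonneg (by linarith [hu.1])]
    nlinarith [hu.2]

namespace StieltjesFunction

section

variable (B : StieltjesFunction ℝ)

lemma measure_singleton_eq_zero {a : ℝ} (hB : ContinuousWithinAt B (Iic a) a) :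
    B.measure {a} = 0 := by
  rw [measure_singleton, hB.leftLim_eq, sub_self, ENNReal.ofReal_zero]

lemma measureReal_Ioc {a b : ℝ} (hab : a ≤ b) : B.measure.real (Ioc a b) = B b - B a := by
  rw [measureReal_def, measure_Ioc, ENNReal.toReal_ofReal (sub_nonneg.2 (B.mono hab))]

lemma abs_setIntegral_Ioc_le {g : ℝ → ℝ} {a b ε : ℝ} (hab : a ≤ b)
    (hg : ∀ u ∈ Ioc a b, |g u| ≤ ε) : |∫ u in Ioc a b, g u ∂B.measure| ≤ ε * (B b - B a) := by
  rw [← B.measureReal_Ioc hab]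
  exact norm_setIntegral_le_of_norm_le_const (f := g) measure_Ioc_lt_top hg

lemma abs_setIntegral_Ioc_sub_sum_le {g : ℝ → ℝ} (hg : Continuous g) {x : ℕ → ℝ}
    (hx : Monotone x) {k : ℕ} {ε : ℝ}
    (hosc : ∀ i < k, ∀ u ∈ Ioc (x i) (x (i + 1)), |g u - g (x i)| ≤ ε) :
    |∫ u in Ioc (x 0) (x k), g u ∂B.measure
        - ∑ i ∈ Finset.range k, g (x i) * (B (x (i + 1)) - B (x i))|
      ≤ ε * (B (x k) - B (x 0)) := by
  have hsplit : ∫ u in Ioc (x 0) (x k), g u ∂B.measure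
      = ∑ i ∈ Finset.range k, ∫ u in Ioc (x i) (x (i + 1)), g u ∂B.measure := by
    rw [← intervalIntegral.integral_of_le (hx (Nat.zero_le k)),
      ← intervalIntegral.sum_integral_adjacent_intervals fun i _ => hg.intervalIntegrable _ _]
    exact Finset.sum_congr rfl fun i _ => intervalIntegral.integral_of_le (hx i.le_succ)
  have hcell : ∀ i ∈ Finset.range k, |∫ u in Ioc (x i) (x (i + 1)), g u ∂B.measure
      - g (x i) * (B (x (i + 1)) - B (x i))| ≤ ε * (B (x (i + 1)) - B (x i)) := by
    intro i hi
    have hle := hx i.le_succ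
    have hconst : g (x i) * (B (x (i + 1)) - B (x i))
        = ∫ _ in Ioc (x i) (x (i + 1)), g (x i) ∂B.measure := by
      rw [setIntegral_const, B.measureReal_Ioc hle, smul_eq_mul, mul_comm]
    rw [hconst, ← integral_sub (hg.intervalIntegrable _ _).1
      (integrableOn_const measure_Ioc_lt_top.ne)]
    exact B.abs_setIntegral_Ioc_le hle (hosc i (Finset.mem_range.1 hi))
  rw [hsplit, ← Finset.sum_sub_distrib]
  calc _ ≤ ∑ i ∈ Finset.range k, ε * (B (x (i + 1)) - B (x i)) :=
        (Finset.abs_sum_le_sum_abs _ _).trans (Finset.sum_le_sum hcell)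
    _ = ε * (B (x k) - B (x 0)) := by
        rw [← Finset.mul_sum, Finset.sum_range_sub (fun i => B (x i))]

end

section

variable {ι : Type*} {l : Filter ι} {Bn : ι → StieltjesFunction ℝ} {B : StieltjesFunction ℝ}
  {a b : ℝ}

lemma tendsto_setIntegral_Ioc_of_tendsto (hB : ∀ x, Tendsto (fun n => Bn n x) l (nhds (B x)))
    {g : ℝ → ℝ} (hg : Continuous g) (hab : a ≤ b) :
    Tendsto (fun n => ∫ u in Ioc a b, g u ∂(Bn n).measure) l
      (nhds (∫ u in Ioc a b, g u ∂B.measure)) := by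
  have hK : Tendsto (fun n => Bn n b - Bn n a + 1 + (B b - B a)) l
      (nhds (B b - B a + 1 + (B b - B a))) :=
    (((hB b).sub (hB a)).add_const 1).add_const _
  refine tendsto_of_forall_eventually_abs_sub_le_mul hK fun ε hε => ?_
  obtain ⟨k, x, hx, hx0, hxk, hosc⟩ := exists_partition_abs_sub_le hab hg.continuousOn hε
  let S : StieltjesFunction ℝ → ℝ := fun F =>
    ∑ i ∈ Finset.range k, g (x i) * (F (x (i + 1)) - F (x i))
  have hS : Tendsto (fun n => S (Bn n)) l (nhds (S B)) :=
    tendsto_finsetSum _ fun i _ => tendsto_const_nhds.mul ((hB _).sub (hB _))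
  filter_upwards [Metric.tendsto_nhds.1 hS ε hε] with n hn
  rw [Real.dist_eq] at hn
  have happroxₙ := (Bn n).abs_setIntegral_Ioc_sub_sum_le hg hx hosc
  have happrox := B.abs_setIntegral_Ioc_sub_sum_le hg hx hosc
  rw [hx0, hxk] at happroxₙ happrox
  rw [abs_sub_comm] at happrox
  calc _ ≤ |∫ u in Ioc a b, g u ∂(Bn n).measure - S (Bn n)| + |S (Bn n) - S B|
        + |S B - ∫ u in Ioc a b, g u ∂B.measure| :=
          (abs_sub_le _ (S B) _).trans (add_le_add_left (abs_sub_le _ _ _) _)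
    _ ≤ ε * (Bn n b - Bn n a) + ε + ε * (B b - B a) := by gcongr
    _ = ε * (Bn n b - Bn n a + 1 + (B b - B a)) := by ring

lemma tendsto_setIntegral_Ioc_sub_of_tendstoUniformlyOn
    (hB : ∀ x, Tendsto (fun n => Bn n x) l (nhds (B x))) {gn : ι → ℝ → ℝ} {g : ℝ → ℝ}
    (hgn : ∀ n, Continuous (gn n)) (hg : Continuous g)
    (hconv : TendstoUniformlyOn gn g l (Ioc a b))
    (hab : a ≤ b) :
    Tendsto (fun n => ∫ u in Ioc a b, gn n u ∂(Bn n).measure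
      - ∫ u in Ioc a b, g u ∂(Bn n).measure) l (nhds 0) := by
  refine tendsto_of_forall_eventually_abs_sub_le_mul ((hB b).sub (hB a)) fun ε hε => ?_
  filter_upwards [Metric.tendstoUniformlyOn_iff.1 hconv ε hε] with n hn
  rw [sub_zero, ← integral_sub (hgn n).integrableOn_Ioc hg.integrableOn_Ioc]
  refine (Bn n).abs_setIntegral_Ioc_le hab fun u hu => ?_
  rw [← Real.dist_eq, dist_comm]
  exact (hn u hu).le

theorem tendsto_setIntegral_Ioc_of_tendstoUniformlyOn
    (hB : ∀ x, Tendsto (fun n => Bn n x) l (nhds (B x))) {gn : ι → ℝ → ℝ} {g : ℝ → ℝ}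
    (hgn : ∀ n, Continuous (gn n)) (hg : Continuous g)
    (hconv : TendstoUniformlyOn gn g l (Ioc a b))
    (hab : a ≤ b) :
    Tendsto (fun n => ∫ u in Ioc a b, gn n u ∂(Bn n).measure) l
      (nhds (∫ u in Ioc a b, g u ∂B.measure)) := by
  simpa using (tendsto_setIntegral_Ioc_sub_of_tendstoUniformlyOn hB hgn hg hconv hab).add
    (tendsto_setIntegral_Ioc_of_tendsto hB hg hab)

end

end StieltjesFunction

/-- convergence of Lebesgue–Stieltjes integrals
`∫_t^{t+s} f_n da_n → ∫_t^{t+s} f da` when `f_n → f` and `a_n → a` uniformly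
on compacts, with `a_n, a` continuous and nondecreasing. -/
theorem stmt_11 (An : ℕ → StieltjesFunction ℝ) (A : StieltjesFunction ℝ)
    (hAncont : ∀ n, Continuous (An n)) (hAcont : Continuous A)
    (fn : ℕ → ℝ → ℝ) (f : ℝ → ℝ)
    (hfncont : ∀ n, Continuous (fn n)) (hfcont : Continuous f)
    (hfconv : TendstoLocallyUniformly fn f atTop)
    (hAconv : TendstoLocallyUniformly (fun n => ⇑(An n)) (⇑A) atTop) :
    ∀ t s : ℝ, 0 ≤ t → 0 ≤ s →
      Tendsto (fun n => ∫ u in Icc t (t + s), fn n u ∂(An n).measure) atTop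
        (nhds (∫ u in Icc t (t + s), f u ∂A.measure)) := by
  intro t s _ hs
  have hIcc : ∀ (B : StieltjesFunction ℝ), Continuous B → ∀ g : ℝ → ℝ,
      ∫ u in Icc t (t + s), g u ∂B.measure = ∫ u in Ioc t (t + s), g u ∂B.measure :=
    fun B hB _ =>
      integral_Icc_eq_integral_Ioc' (B.measure_singleton_eq_zero hB.continuousWithinAt)
  simp only [hIcc _ (hAncont _), hIcc A hAcont]
  have hfconv' : TendstoUniformlyOn fn f atTop (Ioc t (t + s)) :=
    (tendstoLocallyUniformly_iff_forall_isCompact.1 hfconv _ isCompact_Icc).mono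
      Ioc_subset_Icc_self
  exact StieltjesFunction.tendsto_setIntegral_Ioc_of_tendstoUniformlyOn
    (fun x => hAconv.tendstoLocallyUniformlyOn.tendsto_at (mem_univ x)) hfncont hfcont hfconv'
    (le_add_of_nonneg_right hs)
end

section
/- Let (g_n) be a sequence of nonnegative continuous functions on [0,∞) converging pointwise (uniformly on compacts) to g, and let (a_n) be continuous nondecreasing functions converging uniformly on compacts to a continuous nondecreasing a. Then liminf_{n→∞} ∫_0^∞ g_n(u) da_n(u) ≥ ∫_0^∞ g(u) da(u). -/
/-!
Fix `M` and `ε > 0` and cut `(0, M]` into cells `(tᵢ, tᵢ₊₁]` on which `g` oscillates by less than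
`ε / 3`. Against `da`, the integral of `g` over `(0, M]` is at most the Riemann–Stieltjes sum of
the constants `cᵢ = g(tᵢ₊₁) - 2ε/3` plus `ε · da(0, M]`. For large `n`, `gₙ ≥ cᵢ` on the `i`-th
cell (uniform convergence on `[0, M]`), so `∫ gₙ daₙ` dominates the same sum taken against `daₙ`,
and these sums converge to the sum against `da` because `aₙ → a` at the finitely many `tᵢ`.
Letting `ε → 0` and exhausting `(0, ∞)` by `(0, M]` gives the claim; since `a` is continuous,
`da` has no atom at `0`, so `[0, ∞)` and `(0, ∞)` carry the same integral.
-/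

open Set Filter MeasureTheory Topology
open scoped ENNReal

theorem ENNReal.le_of_forall_pos_le_add_ofReal_mul {x y c : ℝ≥0∞} (hc : c ≠ ∞)
    (h : ∀ ε : ℝ, 0 < ε → x ≤ y + ENNReal.ofReal ε * c) : x ≤ y := by
  have h0 : Tendsto ENNReal.ofReal (𝓝[>] (0 : ℝ)) (𝓝 0) := by
    simpa using (ENNReal.continuous_ofReal.tendsto 0).mono_left nhdsWithin_le_nhds
  have hlim : Tendsto (fun ε : ℝ => y + ENNReal.ofReal ε * c) (𝓝[>] 0) (𝓝 y) := by
    simpa using tendsto_const_nhds.add (ENNReal.Tendsto.mul_const h0 (Or.inr hc))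
  exact ge_of_tendsto hlim (eventually_nhdsWithin_of_forall h)

section Partition

variable {α : Type*} [LinearOrder α] [MeasurableSpace α] [TopologicalSpace α]
  [OrderClosedTopology α] [OpensMeasurableSpace α] {t : ℕ → α}

theorem Monotone.setLIntegral_Ioc_eq_sum (ht : Monotone t) (μ : Measure α) (f : α → ℝ≥0∞)
    (k : ℕ) :
    ∫⁻ u in Ioc (t 0) (t k), f u ∂μ =
      ∑ i ∈ Finset.range k, ∫⁻ u in Ioc (t i) (t (i + 1)), f u ∂μ := by
  have hunion : ⋃ i ∈ Finset.range k, Ioc (t i) (t (i + 1)) = Ioc (t 0) (t k) := by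
    simpa using ht.biUnion_Ico_Ioc_map_succ 0 k
  have hdisj : PairwiseDisjoint (↑(Finset.range k) : Set ℕ) fun i => Ioc (t i) (t (i + 1)) :=
    fun i _ j _ hij => by simpa using ht.pairwise_disjoint_on_Ioc_succ hij
  rw [← hunion, lintegral_biUnion_finset hdisj fun _ _ => measurableSet_Ioc]

theorem Monotone.measure_Ioc_eq_sum (ht : Monotone t) (μ : Measure α) (k : ℕ) :
    μ (Ioc (t 0) (t k)) = ∑ i ∈ Finset.range k, μ (Ioc (t i) (t (i + 1))) := by
  simpa using ht.setLIntegral_Ioc_eq_sum μ 1 k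

variable {μ : Measure α} {f : α → ℝ≥0∞} {c : ℕ → ℝ≥0∞} {k : ℕ}

theorem Monotone.setLIntegral_Ioc_le_sum (ht : Monotone t)
    (hf : ∀ i < k, ∀ u ∈ Ioc (t i) (t (i + 1)), f u ≤ c i) :
    ∫⁻ u in Ioc (t 0) (t k), f u ∂μ ≤ ∑ i ∈ Finset.range k, c i * μ (Ioc (t i) (t (i + 1))) := by
  rw [ht.setLIntegral_Ioc_eq_sum]
  gcongr with i hi
  rw [← setLIntegral_const]
  exact setLIntegral_mono' measurableSet_Ioc (hf i (Finset.mem_range.1 hi))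

theorem Monotone.sum_le_setLIntegral_Ioc (ht : Monotone t)
    (hf : ∀ i < k, ∀ u ∈ Ioc (t i) (t (i + 1)), c i ≤ f u) :
    ∑ i ∈ Finset.range k, c i * μ (Ioc (t i) (t (i + 1))) ≤ ∫⁻ u in Ioc (t 0) (t k), f u ∂μ := by
  rw [ht.setLIntegral_Ioc_eq_sum]
  gcongr with i hi
  rw [← setLIntegral_const]
  exact setLIntegral_mono' measurableSet_Ioc (hf i (Finset.mem_range.1 hi))

end Partition

theorem ContinuousOn.exists_partition_dist_lt {β : Type*} [PseudoMetricSpace β] {g : ℝ → β}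
    {a b : ℝ} (hg : ContinuousOn g (Icc a b)) (hab : a ≤ b) {ε : ℝ} (hε : 0 < ε) :
    ∃ (k : ℕ) (t : ℕ → ℝ), Monotone t ∧ t 0 = a ∧ t k = b ∧
      ∀ i < k, ∀ u ∈ Icc (t i) (t (i + 1)), dist (g u) (g (t (i + 1))) < ε := by
  obtain ⟨δ, hδ, hgδ⟩ := Metric.uniformContinuousOn_iff.1
    (isCompact_Icc.uniformContinuousOn_of_continuous hg) ε hε
  obtain ⟨k, hk⟩ := exists_nat_gt ((b - a) / δ)
  have hk0 : (0 : ℝ) < k := (div_nonneg (sub_nonneg.2 hab) hδ.le).trans_lt hk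
  set η := (b - a) / k
  have hη : 0 ≤ η := div_nonneg (sub_nonneg.2 hab) hk0.le
  have hηδ : η < δ := by rwa [div_lt_iff₀ hk0, mul_comm, ← div_lt_iff₀ hδ]
  have hb : a + k * η = b := by simp only [η]; field_simp; ring
  have hmem : ∀ j ≤ k, a + j * η ∈ Icc a b := fun j hj => by
    refine ⟨le_add_of_nonneg_right (by positivity), hb ▸ ?_⟩
    gcongr
  refine ⟨k, fun i => a + i * η, fun i j hij => by dsimp; gcongr, by simp, hb, ?_⟩
  intro i hi u hu
  have hu' : u ∈ Icc a b := ⟨(hmem i hi.le).1.trans hu.1, hu.2.trans (hmem (i + 1) hi).2⟩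
  refine hgδ u hu' _ (hmem (i + 1) hi) ?_
  rw [Real.dist_eq, abs_sub_lt_iff]
  push_cast at hu ⊢
  constructor <;> nlinarith [hu.1, hu.2]

namespace StieltjesFunction

theorem measure_singleton_of_continuousAt (F : StieltjesFunction ℝ) {x : ℝ}
    (hx : ContinuousAt F x) : F.measure {x} = 0 := by
  rw [F.measure_singleton, hx.continuousWithinAt.leftLim_eq, sub_self, ENNReal.ofReal_zero]

theorem tendsto_measure_Ioc {ι : Type*} {l : Filter ι} {F : ι → StieltjesFunction ℝ}
    {G : StieltjesFunction ℝ} (hFG : ∀ x, Tendsto (fun n => F n x) l (𝓝 (G x))) (x y : ℝ) :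
    Tendsto (fun n => (F n).measure (Ioc x y)) l (𝓝 (G.measure (Ioc x y))) := by
  simp only [measure_Ioc]
  exact (ENNReal.continuous_ofReal.tendsto _).comp ((hFG y).sub (hFG x))

theorem setLIntegral_Ioc_le_liminf {F : ℕ → StieltjesFunction ℝ} {G : StieltjesFunction ℝ}
    (hFG : ∀ x, Tendsto (fun n => F n x) atTop (𝓝 (G x))) {f : ℕ → ℝ → ℝ} {g : ℝ → ℝ}
    {a b : ℝ} (hg : ContinuousOn g (Icc a b)) (hfg : TendstoUniformlyOn f g atTop (Icc a b)) :
    ∫⁻ u in Ioc a b, ENNReal.ofReal (g u) ∂G.measure ≤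
      liminf (fun n => ∫⁻ u in Ioc a b, ENNReal.ofReal (f n u) ∂(F n).measure) atTop := by
  rcases lt_or_ge b a with hba | hab
  · simp [Ioc_eq_empty_of_le hba.le]
  refine ENNReal.le_of_forall_pos_le_add_ofReal_mul (c := G.measure (Ioc a b))
    (by simp) fun ε hε => ?_
  obtain ⟨k, t, ht, rfl, rfl, hosc⟩ := hg.exists_partition_dist_lt hab (by positivity : 0 < ε / 3)
  set c : ℕ → ℝ≥0∞ := fun i => ENNReal.ofReal (g (t (i + 1)) - 2 * ε / 3)
  set S : Measure ℝ → ℝ≥0∞ := fun μ => ∑ i ∈ Finset.range k, c i * μ (Ioc (t i) (t (i + 1)))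
  have upper : ∫⁻ u in Ioc (t 0) (t k), ENNReal.ofReal (g u) ∂G.measure ≤
      S G.measure + ENNReal.ofReal ε * G.measure (Ioc (t 0) (t k)) := by
    rw [ht.measure_Ioc_eq_sum, Finset.mul_sum, ← Finset.sum_add_distrib]
    simp only [← add_mul]
    refine ht.setLIntegral_Ioc_le_sum fun i hi u hu =>
      (ENNReal.ofReal_le_ofReal ?_).trans ENNReal.ofReal_add_le
    have := hosc i hi u (Ioc_subset_Icc_self hu)
    rw [Real.dist_eq, abs_lt] at this
    linarith
  have lower : ∀ᶠ n in atTop,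
      S (F n).measure ≤ ∫⁻ u in Ioc (t 0) (t k), ENNReal.ofReal (f n u) ∂(F n).measure := by
    filter_upwards [Metric.tendstoUniformlyOn_iff.1 hfg (ε / 3) (by positivity)] with n hn
    refine ht.sum_le_setLIntegral_Ioc fun i hi u hu => ENNReal.ofReal_le_ofReal ?_
    have h1 := hosc i hi u (Ioc_subset_Icc_self hu)
    have h2 := hn u ⟨(ht (Nat.zero_le i)).trans hu.1.le, hu.2.trans (ht hi)⟩
    rw [Real.dist_eq, abs_lt] at h1 h2
    linarith
  have hlim : Tendsto (fun n => S (F n).measure) atTop (𝓝 (S G.measure)) :=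
    tendsto_finsetSum _ fun i _ =>
      ENNReal.Tendsto.const_mul (tendsto_measure_Ioc hFG _ _) (Or.inr ENNReal.ofReal_ne_top)
  calc _ ≤ S G.measure + ENNReal.ofReal ε * G.measure (Ioc (t 0) (t k)) := upper
    _ ≤ _ := by gcongr; exact hlim.liminf_eq ▸ liminf_le_liminf lower

end StieltjesFunction

theorem stmt_12_general (An : ℕ → StieltjesFunction ℝ) (A : StieltjesFunction ℝ)
    (hAcont : Continuous A)
    (gn : ℕ → ℝ → ℝ) (g : ℝ → ℝ)
    (hgcont : Continuous g)
    (hgconv : TendstoLocallyUniformly gn g atTop)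
    (hAconv : TendstoLocallyUniformly (fun n => ⇑(An n)) (⇑A) atTop) :
    ∫⁻ u in Ici (0 : ℝ), ENNReal.ofReal (g u) ∂A.measure ≤
      Filter.liminf (fun n =>
        ∫⁻ u in Ici (0 : ℝ), ENNReal.ofReal (gn n u) ∂(An n).measure) atTop := by
  have hAt : ∀ x, Tendsto (fun n => An n x) atTop (𝓝 (A x)) := fun x =>
    (tendstoLocallyUniformlyOn_univ.2 hAconv).tendsto_at (mem_univ x)
  have hIoi : ⋃ M : ℕ, Ioc (0 : ℝ) M = Ioi 0 :=
    iUnion_Ioc_eq_Ioi_self_iff.2 fun x _ => exists_nat_ge x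
  have hmono : Monotone fun M : ℕ => Ioc (0 : ℝ) M := fun i j hij =>
    Ioc_subset_Ioc_right (Nat.cast_le.2 hij)
  calc ∫⁻ u in Ici (0 : ℝ), ENNReal.ofReal (g u) ∂A.measure
      = ⨆ M : ℕ, ∫⁻ u in Ioc (0 : ℝ) M, ENNReal.ofReal (g u) ∂A.measure := by
        rw [← setLIntegral_congr (Ioi_ae_eq_Ici' (A.measure_singleton_of_continuousAt
          hAcont.continuousAt)), ← hIoi, setLIntegral_iUnion_of_directed _ hmono.directed_le]
    _ ≤ ⨆ M : ℕ, liminf (fun n =>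
          ∫⁻ u in Ioc (0 : ℝ) M, ENNReal.ofReal (gn n u) ∂(An n).measure) atTop :=
        iSup_mono fun M => StieltjesFunction.setLIntegral_Ioc_le_liminf hAt hgcont.continuousOn
          (tendstoLocallyUniformly_iff_forall_isCompact.1 hgconv _ isCompact_Icc)
    _ ≤ _ := iSup_le fun M => liminf_le_liminf (Eventually.of_forall fun n =>
          lintegral_mono_set (Ioc_subset_Ioi_self.trans Ioi_subset_Ici_self))

/-- Fatou-type lower semicontinuity for Lebesgue–Stieltjes
integrals: if `g_n ≥ 0` converge to `g` uniformly on compacts and the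
continuous nondecreasing `a_n` (with `a_n(0) = 0`) converge to `a` uniformly
on compacts, then `liminf ∫_0^∞ g_n da_n ≥ ∫_0^∞ g da`. -/
theorem stmt_12 (An : ℕ → StieltjesFunction ℝ) (A : StieltjesFunction ℝ)
    (hAncont : ∀ n, Continuous (An n)) (hAcont : Continuous A)
    (hAn0 : ∀ n, An n 0 = 0) (hA0 : A 0 = 0)
    (gn : ℕ → ℝ → ℝ) (g : ℝ → ℝ)
    (hgncont : ∀ n, Continuous (gn n)) (hgcont : Continuous g)
    (hgnnn : ∀ n u, 0 ≤ gn n u) (hgnn : ∀ u, 0 ≤ g u)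
    (hgconv : TendstoLocallyUniformly gn g atTop)
    (hAconv : TendstoLocallyUniformly (fun n => ⇑(An n)) (⇑A) atTop) :
    ∫⁻ u in Ici (0 : ℝ), ENNReal.ofReal (g u) ∂A.measure ≤
      Filter.liminf (fun n =>
        ∫⁻ u in Ici (0 : ℝ), ENNReal.ofReal (gn n u) ∂(An n).measure) atTop :=
  stmt_12_general An A hAcont gn g hgcont hgconv hAconv
end

section
/- Let 𝒲 ⊂ ℝ^k be a closed convex cone with v·v̂₁ ≥ a₀|v| for all v ∈ 𝒲 for some unit vector v̂₁ and a₀ > 0, and let G𝒰 ⊂ ℝ^k be a cone with the same property (same v̂₁, a₀). If w ∈ 𝒲, φ : [0,∞) → ℝ^k is any function, ξ : [0,∞) → ℝ^k has increments in G𝒰, and W(t) = w + φ(t) + ξ(t) ∈ 𝒲 for all t ∈ [0,T], then there is a constant c depending only on a₀ such that for all 0 ≤ t ≤ T: |ξ(t)| + |W(t)| ≤ c(|w| + |W(T)| + sup_{0≤s≤T}|φ(s)|). -/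
/-!
Projecting onto `v̂₁`, the map `t ↦ ⟪ξ t, v̂₁⟫` is nondecreasing (increments lie in `G𝒰`) and
dominates `a₀ ‖ξ t‖`. Its value at `T` equals `⟪W T - w - φ T, v̂₁⟫ ≤ ‖W T‖ + ‖w‖ + ‖φ T‖`,
so `a₀ ‖ξ t‖` is bounded by that quantity, and `‖W t‖ ≤ ‖w‖ + ‖φ t‖ + ‖ξ t‖` follows.
-/

section ConeIncrements

variable {E : Type*} [NormedAddCommGroup E] [InnerProductSpace ℝ E]
  {C : Set E} {e : E} {a : ℝ} {ξ : ℝ → E}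

lemma inner_mono_of_sub_mem (ha : 0 ≤ a) (hC : ∀ v ∈ C, a * ‖v‖ ≤ inner ℝ v e)
    (hinc : ∀ s t : ℝ, 0 ≤ s → s ≤ t → ξ t - ξ s ∈ C) {s t : ℝ} (hs : 0 ≤ s) (hst : s ≤ t) :
    inner ℝ (ξ s) e ≤ inner ℝ (ξ t) e := by
  have h := (mul_nonneg ha (norm_nonneg _)).trans (hC _ (hinc s t hs hst))
  rw [inner_sub_left] at h
  linarith

lemma mul_norm_le_inner_of_sub_mem (ha : 0 ≤ a) (hC : ∀ v ∈ C, a * ‖v‖ ≤ inner ℝ v e)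
    (h0 : ξ 0 ∈ C) (hinc : ∀ s t : ℝ, 0 ≤ s → s ≤ t → ξ t - ξ s ∈ C) {t : ℝ} (ht : 0 ≤ t) :
    a * ‖ξ t‖ ≤ inner ℝ (ξ t) e := by
  calc a * ‖ξ t‖ ≤ a * ‖ξ 0‖ + a * ‖ξ t - ξ 0‖ := by
        rw [← mul_add]
        exact mul_le_mul_of_nonneg_left (norm_le_norm_add_norm_sub' _ _) ha
    _ ≤ inner ℝ (ξ 0) e + inner ℝ (ξ t - ξ 0) e :=
        add_le_add (hC _ h0) (hC _ (hinc 0 t le_rfl ht))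
    _ = inner ℝ (ξ t) e := by rw [← inner_add_left, add_sub_cancel]

end ConeIncrements

lemma inner_le_norm_add_norm_add_norm {E : Type*} [NormedAddCommGroup E]
    [InnerProductSpace ℝ E] {e : E} (he : ‖e‖ = 1) (x y z : E) :
    inner ℝ (x - y - z) e ≤ ‖x‖ + ‖y‖ + ‖z‖ :=
  calc inner ℝ (x - y - z) e ≤ ‖x - y - z‖ := by
        simpa only [he, mul_one] using real_inner_le_norm (x - y - z) e
    _ ≤ ‖x - y‖ + ‖z‖ := norm_sub_le _ _
    _ ≤ ‖x‖ + ‖y‖ + ‖z‖ := by linarith [norm_sub_le x y]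

/-- a bound `|ξ(t)| + |W(t)| ≤ c(|w| + |W(T)| + sup_{[0,T]}|φ|)`
for `W = w + φ + ξ` with values in the cone `𝒲` and `ξ` with increments in the
cone `G𝒰`, with a constant `c` depending only on `a₀`. -/
theorem stmt_16 (a0 : ℝ) (ha0 : 0 < a0) :
    ∃ c : ℝ, 0 < c ∧
      ∀ (k : ℕ) (𝒲 GU : Set (EuclideanSpace ℝ (Fin k)))
        (v1 : EuclideanSpace ℝ (Fin k)), ‖v1‖ = 1 →
        (∀ v ∈ 𝒲, a0 * ‖v‖ ≤ (inner ℝ v v1 : ℝ)) →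
        (∀ v ∈ GU, a0 * ‖v‖ ≤ (inner ℝ v v1 : ℝ)) →
        ∀ (w : EuclideanSpace ℝ (Fin k))
          (φ ξ W : ℝ → EuclideanSpace ℝ (Fin k)) (T : ℝ),
          0 ≤ T → w ∈ 𝒲 → ξ 0 ∈ GU →
          (∀ s t : ℝ, 0 ≤ s → s ≤ t → ξ t - ξ s ∈ GU) →
          (∀ t : ℝ, 0 ≤ t → t ≤ T → W t = w + φ t + ξ t) →
          (∀ t : ℝ, 0 ≤ t → t ≤ T → W t ∈ 𝒲) →
          ∀ Mφ : ℝ, (∀ s : ℝ, 0 ≤ s → s ≤ T → ‖φ s‖ ≤ Mφ) →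
            ∀ t : ℝ, 0 ≤ t → t ≤ T →
              ‖ξ t‖ + ‖W t‖ ≤ c * (‖w‖ + ‖W T‖ + Mφ) := by
  refine ⟨2 / a0 + 1, by positivity, ?_⟩
  intro k 𝒲 GU v1 hv1 _ hGU w φ ξ W T hT _ hξ0 hinc hW _ Mφ hMφ t ht htT
  have hξT : ξ T = W T - w - φ T := by rw [hW T hT le_rfl]; abel
  have hξ : a0 * ‖ξ t‖ ≤ ‖W T‖ + ‖w‖ + Mφ :=
    calc a0 * ‖ξ t‖ ≤ inner ℝ (ξ t) v1 := mul_norm_le_inner_of_sub_mem ha0.le hGU hξ0 hinc ht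
      _ ≤ inner ℝ (ξ T) v1 := inner_mono_of_sub_mem ha0.le hGU hinc ht htT
      _ ≤ ‖W T‖ + ‖w‖ + ‖φ T‖ := hξT ▸ inner_le_norm_add_norm_add_norm hv1 _ _ _
      _ ≤ ‖W T‖ + ‖w‖ + Mφ := by linarith [hMφ T hT le_rfl]
  have hWt : ‖W t‖ ≤ ‖w‖ + Mφ + ‖ξ t‖ := by
    rw [hW t ht htT]
    linarith [norm_add₃_le (a := w) (b := φ t) (c := ξ t), hMφ t ht htT]
  set S := ‖w‖ + ‖W T‖ + Mφ
  have hξ' : ‖ξ t‖ ≤ S / a0 := by rw [le_div_iff₀ ha0]; linarith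
  have hcS : (2 / a0 + 1) * S = 2 * (S / a0) + S := by ring
  linarith [norm_nonneg (W T)]
end
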